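/- arXiv:1904.07382 — 4 statements merged into one kernel-verified Lean document; each statement's English description precedes it below -/
import Mathlib

section
/- Every linear subalgebra of M_2(ℂ) is idempotent compressible: for every subalgebra A of the 2×2 complex matrices and every idempotent E ∈ M_2(ℂ) (E² = E), the set EAE = {EXE : X ∈ A} is closed under multiplication. -/
open Matrix

/-- For a 2×2 idempotent with trace 1 (i.e. rank one), compression is
multiplication by the trace functional: `E * M * E = tr(E*M) • E`. -/
lemma key_compress (E M : Matrix (Fin 2) (Fin 2) ℂ) (hE : E * E = E)
    (ht : E 0 0 + E 1 1 = 1) :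
    E * M * E = (E 0 0 * M 0 0 + E 0 1 * M 1 0 + E 1 0 * M 0 1 + E 1 1 * M 1 1) • E := by
  have h00 := congrFun (congrFun hE 0) 0
  simp [Matrix.mul_apply, Fin.sum_univ_two] at h00
  have hbc : E 0 1 * E 1 0 = E 0 0 * E 1 1 := by linear_combination h00 - E 0 0 * ht
  ext i j
  fin_cases i <;> fin_cases j <;>
    simp only [Matrix.mul_apply, Fin.sum_univ_two, Matrix.smul_apply, smul_eq_mul,
      Fin.mk_zero, Fin.mk_one, Fin.isValue]
  · linear_combination M 1 1 * hbc
  · linear_combination (-M 0 1) * hbc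
  · linear_combination (-M 1 0) * hbc
  · linear_combination M 0 0 * hbc

theorem stmt1 (A : NonUnitalSubalgebra ℂ (Matrix (Fin 2) (Fin 2) ℂ))
    (E : Matrix (Fin 2) (Fin 2) ℂ) (hE : E * E = E) :
    ∀ X ∈ A, ∀ Y ∈ A, ∃ Z ∈ A, (E * X * E) * (E * Y * E) = E * Z * E := by
  intro X hX Y hY
  by_cases ht : E 0 0 + E 1 1 = 1
  · set tX := E 0 0 * X 0 0 + E 0 1 * X 1 0 + E 1 0 * X 0 1 + E 1 1 * X 1 1 with htX
    set tY := E 0 0 * Y 0 0 + E 0 1 * Y 1 0 + E 1 0 * Y 0 1 + E 1 1 * Y 1 1 with htY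
    refine ⟨tY • X, SMulMemClass.smul_mem tY hX, ?_⟩
    have hx := key_compress E X hE ht
    have hy := key_compress E Y hE ht
    have hz : E * (tY • X) * E = tY • (E * X * E) := by
      rw [mul_smul_comm, smul_mul_assoc]
    rw [hx, hy, hz, hx, smul_mul_assoc, mul_smul_comm, smul_smul, smul_smul, hE, mul_comm]
  · -- E is 0 or 1
    have h01 := congrFun (congrFun hE 0) 1
    have h10 := congrFun (congrFun hE 1) 0
    have h00 := congrFun (congrFun hE 0) 0
    have h11 := congrFun (congrFun hE 1) 1
    simp [Matrix.mul_apply, Fin.sum_univ_two] at h01 h10 h00 h11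
    have hb : E 0 1 = 0 := by
      rcases mul_eq_zero.mp (show E 0 1 * (E 0 0 + E 1 1 - 1) = 0 by ring_nf; linear_combination h01) with h | h
      · exact h
      · exact absurd (by linear_combination h) ht
    have hc : E 1 0 = 0 := by
      rcases mul_eq_zero.mp (show E 1 0 * (E 0 0 + E 1 1 - 1) = 0 by ring_nf; linear_combination h10) with h | h
      · exact h
      · exact absurd (by linear_combination h) ht
    have ha : E 0 0 = 0 ∨ E 0 0 = 1 := by
      rcases mul_eq_zero.mp (show E 0 0 * (E 0 0 - 1) = 0 by
        rw [hb] at h00; ring_nf; linear_combination h00) with h | h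
      · exact Or.inl h
      · exact Or.inr (by linear_combination h)
    have hd : E 1 1 = 0 ∨ E 1 1 = 1 := by
      rcases mul_eq_zero.mp (show E 1 1 * (E 1 1 - 1) = 0 by
        rw [hc] at h11; ring_nf; linear_combination h11) with h | h
      · exact Or.inl h
      · exact Or.inr (by linear_combination h)
    rcases ha with ha | ha <;> rcases hd with hd | hd
    · -- E = 0
      have hE0 : E = 0 := by
        ext i j; fin_cases i <;> fin_cases j <;> simpa using by first | exact ha | exact hb | exact hc | exact hd
      refine ⟨0, A.zero_mem, by simp [hE0]⟩
    · exact absurd (by rw [ha, hd]; ring) ht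
    · exact absurd (by rw [ha, hd]; ring) ht
    · -- E = 1
      have hE1 : E = 1 := by
        ext i j; fin_cases i <;> fin_cases j <;>
          simp [Matrix.one_apply] <;> first | exact ha | exact hb | exact hc | exact hd
      refine ⟨X * Y, A.mul_mem hX hY, by simp [hE1]⟩
end

section
/- If A is a subalgebra of M_n(ℂ) that is idempotent compressible, then its unitization A + ℂ·I is idempotent compressible. -/
open Matrix

theorem stmt2 (n : ℕ) (A : NonUnitalSubalgebra ℂ (Matrix (Fin n) (Fin n) ℂ))
    (hA : ∀ E : Matrix (Fin n) (Fin n) ℂ, E * E = E →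
      ∀ X ∈ A, ∀ Y ∈ A, ∃ Z ∈ A, (E * X * E) * (E * Y * E) = E * Z * E) :
    ∀ E : Matrix (Fin n) (Fin n) ℂ, E * E = E →
      ∀ X ∈ A, ∀ lam : ℂ, ∀ Y ∈ A, ∀ mu : ℂ,
        ∃ Z ∈ A, ∃ ν : ℂ,
          (E * (X + lam • 1) * E) * (E * (Y + mu • 1) * E) = E * (Z + ν • 1) * E := by
  intro E hE X hX lam Y hY mu
  obtain ⟨Z, hZ, hZeq⟩ := hA E hE X hX Y hY
  refine ⟨Z + mu • X + lam • Y, ?_, lam * mu, ?_⟩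
  · exact A.add_mem (A.add_mem hZ (A.smul_mem mu hX)) (A.smul_mem lam hY)
  · have e1 : E * (X + lam • 1) * E = E * X * E + lam • E := by
      rw [mul_add, add_mul, mul_smul_comm, smul_mul_assoc, mul_one, hE]
    have e2 : E * (Y + mu • 1) * E = E * Y * E + mu • E := by
      rw [mul_add, add_mul, mul_smul_comm, smul_mul_assoc, mul_one, hE]
    have e3 : E * X * E * E = E * X * E := by rw [mul_assoc, hE]
    have e4 : E * (E * Y * E) = E * Y * E := by
      rw [← mul_assoc, ← mul_assoc, hE]
    have e5 : E * (Z + mu • X + lam • Y + (lam * mu) • (1 : Matrix (Fin n) (Fin n) ℂ)) * E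
        = E * Z * E + mu • (E * X * E) + lam • (E * Y * E) + (lam * mu) • E := by
      simp only [mul_add, add_mul, mul_smul_comm, smul_mul_assoc, mul_one, hE]
    rw [e1, e2, e5, add_mul, mul_add, mul_add, smul_mul_assoc, smul_mul_assoc,
      mul_smul_comm, mul_smul_comm, smul_smul, e3, e4, hE, hZeq]
    abel
end

section
/- If S ⊆ M_{n×p}(ℂ) is a left submodule over M_n(ℂ) (i.e., a linear subspace closed under left multiplication by all n×n matrices), then there exists an orthogonal projection Q ∈ M_p(ℂ) such that S = M_{n×p}(ℂ)·Q. -/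
open Matrix

theorem stmt7 (n p : ℕ) (S : Submodule ℂ (Matrix (Fin n) (Fin p) ℂ))
    (hS : ∀ A : Matrix (Fin n) (Fin n) ℂ, ∀ X ∈ S, A * X ∈ S) :
    ∃ Q : Matrix (Fin p) (Fin p) ℂ, Qᴴ = Q ∧ Q * Q = Q ∧
      (S : Set (Matrix (Fin n) (Fin p) ℂ)) = {Y | ∃ X : Matrix (Fin n) (Fin p) ℂ, Y = X * Q} := by
  classical
  -- the span of all rows of elements of S
  set V : Submodule ℂ (EuclideanSpace ℂ (Fin p)) :=
    Submodule.span ℂ {x : EuclideanSpace ℂ (Fin p) | ∃ X ∈ S, ∃ i : Fin n, X i = x} with hV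
  -- linear map putting a vector in row i
  let e : Fin n → (Fin p → ℂ) →ₗ[ℂ] Matrix (Fin n) (Fin p) ℂ := fun i =>
    { toFun := fun x => Matrix.of fun j k => if j = i then x k else 0
      map_add' := by
        intro x y; ext j k
        simp only [Matrix.of_apply, Matrix.add_apply, Pi.add_apply]
        split <;> simp
      map_smul' := by
        intro c x; ext j k
        simp only [Matrix.of_apply, Matrix.smul_apply, Pi.smul_apply, RingHom.id_apply]
        split <;> simp }
  have he : ∀ (i : Fin n), ∀ x ∈ V, e i x ∈ S := by
    intro i x hx
    induction hx using Submodule.span_induction with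
    | mem x hx =>
      obtain ⟨X, hX, j, hj⟩ := hx
      have hx' : e i x = Matrix.single i j (1 : ℂ) * X := by
        ext a k
        simp only [e, LinearMap.coe_mk, AddHom.coe_mk, Matrix.of_apply, Matrix.mul_apply,
          Matrix.single, ite_and, boole_mul]
        rw [show x k = X j k from (congrFun hj k).symm]
        by_cases ha : a = i
        · subst ha
          simp [Finset.sum_ite_eq]
        · simp [ha, Ne.symm ha]
      rw [hx']
      exact hS _ X hX
    | zero => simp only [WithLp.ofLp_zero, map_zero]; exact S.zero_mem
    | add x y _ _ hx hy => simpa using S.add_mem hx hy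
    | smul c x _ hx => simpa using S.smul_mem c hx
  have hrow : ∀ X ∈ S, ∀ i : Fin n, (WithLp.toLp 2 (X i) : EuclideanSpace ℂ (Fin p)) ∈ V :=
    fun X hX i => Submodule.subset_span ⟨X, hX, i, rfl⟩
  -- S is exactly the matrices with all rows in V
  have hSV : ∀ X : Matrix (Fin n) (Fin p) ℂ,
      X ∈ S ↔ ∀ i : Fin n, (WithLp.toLp 2 (X i) : EuclideanSpace ℂ (Fin p)) ∈ V := by
    intro X
    constructor
    · exact fun hX => hrow X hX
    · intro h
      have hXsum : X = ∑ i : Fin n, e i (X i) := by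
        ext j k
        simp only [Matrix.sum_apply, e, LinearMap.coe_mk, AddHom.coe_mk, Matrix.of_apply]
        rw [Finset.sum_ite_eq Finset.univ j (fun i => X i k)]
        simp
      rw [hXsum]
      exact Submodule.sum_mem S fun i _ => he i (WithLp.toLp 2 (X i)) (h i)
  -- the orthogonal projection onto V as a linear map
  let P : EuclideanSpace ℂ (Fin p) →ₗ[ℂ] EuclideanSpace ℂ (Fin p) :=
    (V.subtypeL ∘L V.orthogonalProjection : _ →L[ℂ] _)
  have hPfix : ∀ x : EuclideanSpace ℂ (Fin p), x ∈ V → P x = x := by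
    intro x hx
    exact Submodule.starProjection_eq_self_iff.2 hx
  have hPmem : ∀ x : EuclideanSpace ℂ (Fin p), P x ∈ V := fun x =>
    (V.orthogonalProjection x).2
  set M : Matrix (Fin p) (Fin p) ℂ := Matrix.toEuclideanLin.symm P with hMdef
  have hM : Matrix.toEuclideanLin M = P := Matrix.toEuclideanLin.apply_symm_apply P
  have hMv : ∀ x : EuclideanSpace ℂ (Fin p), M *ᵥ (x : Fin p → ℂ) = P x := by
    intro x
    have := congrFun (congrArg DFunLike.coe hM) x
    rw [Matrix.toEuclideanLin_apply] at this
    exact congrArg WithLp.ofLp this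
  have hMherm : Mᴴ = M :=
    Matrix.isHermitian_iff_isSymmetric.2 (by rw [hM]; exact V.starProjection_isSymmetric)
  have hMM : M * M = M := by
    have key : ∀ x : Fin p → ℂ, (M * M) *ᵥ x = M *ᵥ x := by
      intro x
      rw [← Matrix.mulVec_mulVec, hMv, hMv, hPfix _ (hPmem _)]
    ext i j
    have := congrFun (key (Pi.single j 1)) i
    simpa [Matrix.mulVec_single] using this
  have hrowmul : ∀ (X : Matrix (Fin n) (Fin p) ℂ) (i : Fin n), (X * Mᵀ) i = M *ᵥ (X i) := by
    intro X i
    have h1 : (X * Mᵀ) i = (X i) ᵥ* Mᵀ := by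
      funext k
      simp [Matrix.mul_apply, Matrix.vecMul, dotProduct]
    rw [h1, Matrix.vecMul_transpose]
  refine ⟨Mᵀ, ?_, ?_, ?_⟩
  · ext i j
    have := congrFun (congrFun hMherm j) i
    simpa [Matrix.conjTranspose_apply, Matrix.transpose_apply] using this
  · rw [← Matrix.transpose_mul, hMM]
  · ext Y
    simp only [SetLike.mem_coe, Set.mem_setOf_eq, hSV]
    constructor
    · intro h
      refine ⟨Y, ?_⟩
      funext i
      rw [hrowmul Y i, show M *ᵥ Y i = (P (WithLp.toLp 2 (Y i))).ofLp from hMv _, hPfix _ (h i)]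
    · rintro ⟨X, rfl⟩ i
      rw [hrowmul X i, show M *ᵥ X i = (P (WithLp.toLp 2 (X i))).ofLp from hMv _]
      exact hPmem (WithLp.toLp 2 (X i))
end

section
/- Let A be the subalgebra of M_3(ℂ) of matrices of the form [[x,y,z],[0,x,y],[0,0,x]] for x,y,z ∈ ℂ (the unital algebra generated by a nilpotent Jordan block of size 3). Then A is not projection compressible: there exists an orthogonal projection P ∈ M_3(ℂ) such that PAP is not closed under multiplication. -/
open Matrix

theorem stmt15 :
    ∃ P : Matrix (Fin 3) (Fin 3) ℂ, Pᴴ = P ∧ P * P = P ∧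
      ¬ (∀ a ∈ {Y : Matrix (Fin 3) (Fin 3) ℂ |
            ∃ x y z : ℂ, Y = P * !![x, y, z; 0, x, y; 0, 0, x] * P},
         ∀ b ∈ {Y : Matrix (Fin 3) (Fin 3) ℂ |
            ∃ x y z : ℂ, Y = P * !![x, y, z; 0, x, y; 0, 0, x] * P},
          a * b ∈ {Y : Matrix (Fin 3) (Fin 3) ℂ |
            ∃ x y z : ℂ, Y = P * !![x, y, z; 0, x, y; 0, 0, x] * P}) := by
  refine ⟨!![(1:ℂ)/2, 0, 1/2; 0, 1, 0; 1/2, 0, 1/2], ?_, ?_, ?_⟩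
  · ext i j
    fin_cases i <;> fin_cases j <;>
      simp [conjTranspose_apply]
  · rw [Matrix.mul_fin_three]; norm_num
  · intro h
    have ha : (!![(1:ℂ)/2, 0, 1/2; 0, 1, 0; 1/2, 0, 1/2] *
        !![(0:ℂ), 1, 0; 0, 0, 1; 0, 0, 0] *
        !![(1:ℂ)/2, 0, 1/2; 0, 1, 0; 1/2, 0, 1/2]) ∈
        {Y : Matrix (Fin 3) (Fin 3) ℂ |
          ∃ x y z : ℂ, Y = !![(1:ℂ)/2, 0, 1/2; 0, 1, 0; 1/2, 0, 1/2] *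
            !![x, y, z; 0, x, y; 0, 0, x] * !![(1:ℂ)/2, 0, 1/2; 0, 1, 0; 1/2, 0, 1/2]} :=
      ⟨0, 1, 0, by norm_num⟩
    have hb : (!![(1:ℂ)/2, 0, 1/2; 0, 1, 0; 1/2, 0, 1/2] *
        !![(0:ℂ), 0, 1; 0, 0, 0; 0, 0, 0] *
        !![(1:ℂ)/2, 0, 1/2; 0, 1, 0; 1/2, 0, 1/2]) ∈
        {Y : Matrix (Fin 3) (Fin 3) ℂ |
          ∃ x y z : ℂ, Y = !![(1:ℂ)/2, 0, 1/2; 0, 1, 0; 1/2, 0, 1/2] *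
            !![x, y, z; 0, x, y; 0, 0, x] * !![(1:ℂ)/2, 0, 1/2; 0, 1, 0; 1/2, 0, 1/2]} :=
      ⟨0, 0, 1, by norm_num⟩
    obtain ⟨x, y, z, heq⟩ := h _ ha _ hb
    have h01 := congrFun (congrFun heq 0) 1
    have h10 := congrFun (congrFun heq 1) 0
    simp [Matrix.mul_apply, Fin.sum_univ_three] at h01 h10
    rw [h01] at h10
    norm_num at h10
end
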